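/- Assume ρ < 1 and set γ₀ = ρ². Then the compensation recursion is well defined: for every i ≥ 0 there exists a unique δ_i ∈ ℂ with 0 < |δ_i| < |γ_i| such that (γ_i, δ_i) satisfies the kernel equation, and a unique γ_{i+1} ∈ ℂ with 0 < |γ_{i+1}| < |δ_i| such that (γ_{i+1}, δ_i) satisfies the kernel equation; consequently 1 > ρ² = |γ₀| > |δ₀| > |γ₁| > |δ₁| > |γ₂| > ⋯. -/

import Mathlib

/-!
Write `A = λāa`, `K = λ̄āa`, `M = λ(a²+ā²)`. For real `γ ∈ (0,1)` the kernel equation is a cubic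
in `δ` that is positive at `0` and at `-γ` and negative at `γ`. It therefore has a real root
`δ ∈ (0,γ)`, and after dividing it out what is left is a quadratic that is negative at `±γ`, so
its roots lie outside `[-γ,γ]`. For real `δ ∈ (0,1)` the equation is a quadratic in `γ` that is
negative at `δ` and has a positive constant term, so one root lies in `(0,δ)` and the other
beyond `δ`. Hence each step has exactly one solution in the open disc, and that solution is
real and positive, so the recursion never leaves `(0,1)`.
-/

/-- The load ρ = λ(ā²+a²)/(2λ̄āa). -/
noncomputable def rhoLoad (a lam : ℝ) : ℝ :=
  lam * ((1-a)^2 + a^2) / (2 * (1-lam) * (1-a) * a)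

/-- The kernel equation in (γ, δ) ∈ ℂ². -/
def Kernel (a lam : ℝ) (g d : ℂ) : Prop :=
  (1 - ((1-(lam:ℂ))*((1-(a:ℂ))^2+(a:ℂ)^2) + (lam:ℂ)*(a:ℂ)*(1-(a:ℂ)))) * g * d
    = ((1-(lam:ℂ))*(1-(a:ℂ))*(a:ℂ)*g + (lam:ℂ)*((a:ℂ)^2+(1-(a:ℂ))^2)) * d^2
      + (lam:ℂ)*(1-(a:ℂ))*(a:ℂ)*d^3 + (1-(lam:ℂ))*(1-(a:ℂ))*(a:ℂ)*g^2

open Set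

theorem exists_factorization_of_quadratic_neg {a b c t₁ t₂ : ℝ} (ha : 0 < a)
    (h₁ : a * t₁ ^ 2 + b * t₁ + c < 0) (h₂ : a * t₂ ^ 2 + b * t₂ + c < 0) :
    ∃ r s : ℝ, r < t₁ ∧ t₂ < s ∧ ∀ z : ℂ, a * z ^ 2 + b * z + c = a * (z - r) * (z - s) := by
  have hΔ : 0 ≤ b ^ 2 - 4 * a * c := by nlinarith [sq_nonneg (2 * a * t₁ + b)]
  obtain ⟨σ, hσ0, hσ⟩ : ∃ σ : ℝ, 0 ≤ σ ∧ σ ^ 2 = b ^ 2 - 4 * a * c :=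
    ⟨_, Real.sqrt_nonneg _, Real.sq_sqrt hΔ⟩
  obtain ⟨r, hr⟩ : ∃ r, r = (-b - σ) / (2 * a) := ⟨_, rfl⟩
  obtain ⟨s, hs⟩ : ∃ s, s = (-b + σ) / (2 * a) := ⟨_, rfl⟩
  have hsum : a * (r + s) = -b := by rw [hr, hs]; field_simp; ring
  have hprod : a * r * s = c := by rw [hr, hs]; field_simp; linear_combination -hσ
  have hrs : r ≤ s := by rw [hr, hs]; gcongr; linarith
  have between {t : ℝ} (ht : a * t ^ 2 + b * t + c < 0) : r < t ∧ t < s := by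
    have : a * ((t - r) * (t - s)) < 0 := by linear_combination ht - t * hsum + hprod
    rcases mul_neg_iff.1 (neg_of_mul_neg_right this ha.le) with h | h
    · constructor <;> linarith
    · linarith
  refine ⟨r, s, (between h₁).1, (between h₂).2, fun z ↦ ?_⟩
  have hsumℂ : (a : ℂ) * (r + s) = -b := by exact_mod_cast hsum
  have hprodℂ : (a : ℂ) * r * s = c := by exact_mod_cast hprod
  linear_combination z * hsumℂ - hprodℂ

/-- With `A = λāa`, `K = λ̄āa`, `M = λ(a²+ā²)` the kernel equation reads
`kernelPoly A K M γ δ = 0`: the coefficient of `γδ` is `A + M + 2K` because `a² + ā² + 2aā = 1`. -/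
def kernelPoly {R : Type*} [CommRing R] (A K M γ δ : R) : R :=
  A * δ ^ 3 + (K * γ + M) * δ ^ 2 - (A + M + 2 * K) * γ * δ + K * γ ^ 2

section kernelPoly

variable {R : Type*} [CommRing R]

theorem kernelPoly_eq_quadratic (A K M γ δ : R) :
    kernelPoly A K M γ δ =
      K * γ ^ 2 + (K * δ ^ 2 - (A + M + 2 * K) * δ) * γ + (A * δ ^ 3 + M * δ ^ 2) := by
  unfold kernelPoly; ring

theorem kernelPoly_eq_mul_of_eq_zero {A K M γ δ : R} (h : kernelPoly A K M γ δ = 0) (t : R) :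
    kernelPoly A K M γ t =
      (t - δ) * (A * t ^ 2 + (A * δ + K * γ + M) * t +
        (A * δ ^ 2 + (K * γ + M) * δ - (A + M + 2 * K) * γ)) := by
  unfold kernelPoly at h ⊢; linear_combination h

end kernelPoly

@[norm_cast]
theorem ofReal_kernelPoly (A K M γ δ : ℝ) :
    ((kernelPoly A K M γ δ : ℝ) : ℂ) = kernelPoly (A : ℂ) K M γ δ := by
  simp [kernelPoly]

theorem abs_lt_of_norm_ofReal_lt {r γ : ℝ} (h : ‖(r : ℂ)‖ < γ) : |r| < γ := by
  rwa [Complex.norm_real, Real.norm_eq_abs] at h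

theorem exists_root_kernelPoly_snd {A K M γ : ℝ} (hA : 0 < A) (hK : 0 < K) (hM : 0 < M)
    (hγ : γ ∈ Ioo 0 1) :
    ∃ δ ∈ Ioo 0 γ, kernelPoly A K M γ δ = 0 ∧
      ∀ z : ℂ, ‖z‖ < γ → kernelPoly (A : ℂ) K M γ z = 0 → z = δ := by
  obtain ⟨hγ0, hγ1⟩ := hγ
  have h1γ := sub_pos.2 hγ1
  have f_zero : 0 < kernelPoly A K M γ 0 := by simp only [kernelPoly]; ring_nf; positivity
  have f_γ : kernelPoly A K M γ γ < 0 := by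
    have : kernelPoly A K M γ γ = -((A + K) * (1 - γ) * γ ^ 2) := by unfold kernelPoly; ring
    rw [this, neg_lt_zero]
    positivity
  have f_neg_γ : 0 < kernelPoly A K M γ (-γ) := by
    have : kernelPoly A K M γ (-γ) = (A * (1 - γ) + K * γ + 2 * M + 3 * K) * γ ^ 2 := by
      unfold kernelPoly; ring
    rw [this]
    positivity
  obtain ⟨δ, ⟨hδ0, hδγ⟩, hδ⟩ := intermediate_value_Ioo' hγ0.le
    (by unfold kernelPoly; fun_prop) ⟨f_γ, f_zero⟩
  rw [kernelPoly_eq_mul_of_eq_zero hδ] at f_γ f_neg_γ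
  obtain ⟨r, s, hr, hs, hq⟩ := exists_factorization_of_quadratic_neg hA
    (neg_of_mul_pos_right f_neg_γ (by linarith)) (neg_of_mul_neg_right f_γ (by linarith))
  refine ⟨δ, ⟨hδ0, hδγ⟩, hδ, fun z hz hzroot ↦ ?_⟩
  push_cast at hq
  rw [kernelPoly_eq_mul_of_eq_zero (δ := (δ : ℂ)) (by exact_mod_cast hδ), hq] at hzroot
  rcases mul_eq_zero.1 hzroot with h | h
  · exact sub_eq_zero.1 h
  rcases mul_eq_zero.1 h with h | h
  · rcases mul_eq_zero.1 h with h | h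
    · exact absurd h (by exact_mod_cast hA.ne')
    · rw [sub_eq_zero.1 h] at hz; linarith [abs_lt.1 (abs_lt_of_norm_ofReal_lt hz)]
  · rw [sub_eq_zero.1 h] at hz; linarith [abs_lt.1 (abs_lt_of_norm_ofReal_lt hz)]

theorem exists_root_kernelPoly_fst {A K M δ : ℝ} (hA : 0 < A) (hK : 0 < K) (hM : 0 < M)
    (hδ : δ ∈ Ioo 0 1) :
    ∃ γ ∈ Ioo 0 δ, kernelPoly A K M γ δ = 0 ∧
      ∀ z : ℂ, ‖z‖ < δ → kernelPoly (A : ℂ) K M z δ = 0 → z = γ := by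
  obtain ⟨hδ0, hδ1⟩ := hδ
  have q_neg : kernelPoly A K M δ δ < 0 := by
    have : kernelPoly A K M δ δ = -((A + K) * (1 - δ) * δ ^ 2) := by unfold kernelPoly; ring
    rw [this, neg_lt_zero]
    have := sub_pos.2 hδ1
    positivity
  rw [kernelPoly_eq_quadratic] at q_neg
  obtain ⟨r, s, hr, hs, hq⟩ := exists_factorization_of_quadratic_neg hK q_neg q_neg
  push_cast at hq
  have factor (z : ℂ) : kernelPoly (A : ℂ) K M z δ = K * (z - r) * (z - s) := by
    rw [kernelPoly_eq_quadratic, hq]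
  have hrs : K * s * r = A * δ ^ 3 + M * δ ^ 2 := by
    have := factor 0
    simp only [kernelPoly, zero_sub] at this
    exact_mod_cast (by linear_combination -this : (K : ℂ) * s * r = A * δ ^ 3 + M * δ ^ 2)
  have hr0 : 0 < r :=
    pos_of_mul_pos_right (hrs ▸ by positivity) (mul_pos hK (hδ0.trans hs)).le
  refine ⟨r, ⟨hr0, hr⟩, ?_, fun z hz hzroot ↦ ?_⟩
  · have : ((kernelPoly A K M r δ : ℝ) : ℂ) = 0 := by rw [ofReal_kernelPoly, factor]; ring
    exact_mod_cast this
  · rw [factor] at hzroot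
    rcases mul_eq_zero.1 hzroot with h | h
    · rcases mul_eq_zero.1 h with h | h
      · exact absurd h (by exact_mod_cast hK.ne')
      · exact sub_eq_zero.1 h
    · rw [sub_eq_zero.1 h] at hz; linarith [abs_lt.1 (abs_lt_of_norm_ofReal_lt hz)]

theorem kernel_iff_kernelPoly_eq_zero (a lam : ℝ) (g d : ℂ) :
    Kernel a lam g d ↔ kernelPoly ((lam * (1 - a) * a : ℝ) : ℂ) ((1 - lam) * (1 - a) * a : ℝ)
      (lam * (a ^ 2 + (1 - a) ^ 2) : ℝ) g d = 0 := by
  unfold Kernel kernelPoly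
  push_cast
  constructor <;> intro h <;> linear_combination -h

theorem exists_kernel_snd {a lam γ : ℝ} (ha : 0 < a) (ha1 : a < 1) (hl : 0 < lam) (hl1 : lam < 1)
    (hγ : γ ∈ Ioo 0 1) :
    ∃ δ ∈ Ioo 0 γ, Kernel a lam γ δ ∧ ∀ z : ℂ, ‖z‖ < γ → Kernel a lam γ z → z = δ := by
  have := sub_pos.2 ha1
  have := sub_pos.2 hl1
  simp only [kernel_iff_kernelPoly_eq_zero, ← ofReal_kernelPoly, Complex.ofReal_eq_zero]
  exact exists_root_kernelPoly_snd (by positivity) (by positivity) (by positivity) hγ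

theorem exists_kernel_fst {a lam δ : ℝ} (ha : 0 < a) (ha1 : a < 1) (hl : 0 < lam) (hl1 : lam < 1)
    (hδ : δ ∈ Ioo 0 1) :
    ∃ γ ∈ Ioo 0 δ, Kernel a lam γ δ ∧ ∀ z : ℂ, ‖z‖ < δ → Kernel a lam z δ → z = γ := by
  have := sub_pos.2 ha1
  have := sub_pos.2 hl1
  simp only [kernel_iff_kernelPoly_eq_zero, ← ofReal_kernelPoly, Complex.ofReal_eq_zero]
  exact exists_root_kernelPoly_fst (by positivity) (by positivity) (by positivity) hδ

/-- if ρ < 1, the compensation recursion starting at γ₀ = ρ² is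
well defined: at each step there is a unique δ_i with 0 < |δ_i| < |γ_i| solving
the kernel equation with γ_i, and a unique γ_{i+1} with 0 < |γ_{i+1}| < |δ_i|
solving the kernel equation with δ_i; consequently
1 > ρ² = |γ₀| > |δ₀| > |γ₁| > |δ₁| > ⋯ . -/
theorem stmt6 (a lam : ℝ) (ha : 0 < a) (ha1 : a < 1) (hl : 0 < lam) (hl1 : lam < 1)
    (hρ : rhoLoad a lam < 1) :
    ∃ g d : ℕ → ℂ,
      g 0 = (((rhoLoad a lam)^2 : ℝ) : ℂ) ∧
      (∀ i : ℕ,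
        (0 < ‖d i‖ ∧ ‖d i‖ < ‖g i‖ ∧
          Kernel a lam (g i) (d i)) ∧
        (∀ z : ℂ, 0 < ‖z‖ → ‖z‖ < ‖g i‖ →
          Kernel a lam (g i) z → z = d i) ∧
        (0 < ‖g (i+1)‖ ∧ ‖g (i+1)‖ < ‖d i‖ ∧
          Kernel a lam (g (i+1)) (d i)) ∧
        (∀ z : ℂ, 0 < ‖z‖ → ‖z‖ < ‖d i‖ →
          Kernel a lam z (d i) → z = g (i+1))) ∧
      (rhoLoad a lam)^2 < 1 ∧ ‖g 0‖ = (rhoLoad a lam)^2 := by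
  have hρ2 : rhoLoad a lam ^ 2 ∈ Ioo (0 : ℝ) 1 := by
    have := sub_pos.2 ha1
    have := sub_pos.2 hl1
    have : 0 < rhoLoad a lam := by unfold rhoLoad; positivity
    exact ⟨by positivity, by nlinarith⟩
  choose! D hD hDker hDuniq using fun γ (hγ : γ ∈ Ioo (0 : ℝ) 1) ↦
    exists_kernel_snd ha ha1 hl hl1 hγ
  choose! G hG hGker hGuniq using fun δ (hδ : δ ∈ Ioo (0 : ℝ) 1) ↦
    exists_kernel_fst ha ha1 hl hl1 hδ
  have hD' {γ : ℝ} (hγ : γ ∈ Ioo (0 : ℝ) 1) : D γ ∈ Ioo 0 1 :=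
    ⟨(hD γ hγ).1, (hD γ hγ).2.trans hγ.2⟩
  have hmaps : MapsTo (G ∘ D) (Ioo 0 1) (Ioo 0 1) := fun γ hγ ↦
    ⟨(hG _ (hD' hγ)).1, (hG _ (hD' hγ)).2.trans (hD' hγ).2⟩
  set γ : ℕ → ℝ := fun n ↦ (G ∘ D)^[n] (rhoLoad a lam ^ 2)
  have hγ (n : ℕ) : γ n ∈ Ioo 0 1 := hmaps.iterate n hρ2
  have hγ_succ (n : ℕ) : γ (n + 1) = G (D (γ n)) := Function.iterate_succ_apply' _ _ _
  refine ⟨fun n ↦ γ n, fun n ↦ D (γ n), rfl, fun i ↦ ?_, hρ2.2, Complex.norm_of_nonneg hρ2.1.le⟩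
  have hδ := hD' (hγ i)
  simp only [hγ_succ, Complex.norm_of_nonneg (hγ i).1.le, Complex.norm_of_nonneg hδ.1.le,
    Complex.norm_of_nonneg (hG _ hδ).1.le]
  exact ⟨⟨(hD _ (hγ i)).1, (hD _ (hγ i)).2, hDker _ (hγ i)⟩, fun z _ ↦ hDuniq _ (hγ i) z,
    ⟨(hG _ hδ).1, (hG _ hδ).2, hGker _ hδ⟩, fun z _ ↦ hGuniq _ hδ z⟩
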